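/- Let f(μ₁, μᵢ) = (μ₁ − μᵢ)/D(μᵢ‖μ₁) on the domain {(μ₁, μᵢ) ∈ (0,1)² : μ₁ > μᵢ}. Then the partial derivative of f with respect to μᵢ equals D(μ₁‖μᵢ)/D(μᵢ‖μ₁)², and in particular is nonnegative on this domain. -/

import Mathlib

noncomputable def binKL (a b : ℝ) : ℝ :=
  a * Real.log (a / b) + (1 - a) * Real.log ((1 - a) / (1 - b))

/-!
The derivative of `y ↦ D(y‖μ₁)` is `log (y/μ₁) - log ((1-y)/(1-μ₁))`, and the quotient rule
turns the numerator of the derivative of `(μ₁ - y) / D(y‖μ₁)` into exactly `D(μ₁‖y)`;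
positivity of the KL divergence off the diagonal then gives the sign.
-/

open Real Set InformationTheory

/-- `D(a‖b)` as the `f`-divergence of `klFun` between the two Bernoulli laws. -/
lemma binKL_eq_klFun {a b : ℝ} (hb : b ∈ Ioo (0 : ℝ) 1) :
    binKL a b = b * klFun (a / b) + (1 - b) * klFun ((1 - a) / (1 - b)) := by
  have hb0 : b ≠ 0 := hb.1.ne'
  have hb1 : 1 - b ≠ 0 := (sub_pos.2 hb.2).ne'
  simp only [binKL, klFun_apply]
  field_simp
  ring

lemma binKL_pos {a b : ℝ} (ha : a ∈ Icc (0 : ℝ) 1) (hb : b ∈ Ioo (0 : ℝ) 1) (hab : a ≠ b) :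
    0 < binKL a b := by
  have hb1 : 0 < 1 - b := sub_pos.2 hb.2
  have hfirst : 0 < klFun (a / b) := by
    refine (klFun_nonneg (div_nonneg ha.1 hb.1.le)).lt_of_ne' fun h => hab ?_
    rw [klFun_eq_zero_iff (div_nonneg ha.1 hb.1.le), div_eq_one_iff_eq hb.1.ne'] at h
    exact h
  have hsecond : 0 ≤ klFun ((1 - a) / (1 - b)) :=
    klFun_nonneg (div_nonneg (sub_nonneg.2 ha.2) hb1.le)
  rw [binKL_eq_klFun hb]
  exact add_pos_of_pos_of_nonneg (mul_pos hb.1 hfirst) (mul_nonneg hb1.le hsecond)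

lemma hasDerivAt_binKL_left {a b : ℝ} (ha0 : a ≠ 0) (ha1 : a ≠ 1) (hb0 : b ≠ 0) (hb1 : b ≠ 1) :
    HasDerivAt (fun x => binKL x b) (log (a / b) - log ((1 - a) / (1 - b))) a := by
  have ha1' : 1 - a ≠ 0 := sub_ne_zero.2 ha1.symm
  have hb1' : 1 - b ≠ 0 := sub_ne_zero.2 hb1.symm
  have hratio : HasDerivAt (fun x => x / b) (1 / b) a := (hasDerivAt_id a).div_const b
  have hratio' : HasDerivAt (fun x => (1 - x) / (1 - b)) (-1 / (1 - b)) a :=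
    ((hasDerivAt_id a).const_sub 1).div_const (1 - b)
  have hD : HasDerivAt (fun x => binKL x b) _ a :=
    ((hasDerivAt_id' a).mul (hratio.log (div_ne_zero ha0 hb0))).add
      (((hasDerivAt_id' a).const_sub 1).mul (hratio'.log (div_ne_zero ha1' hb1')))
  refine hD.congr_deriv ?_
  field_simp
  ring

/-- The quotient-rule numerator of `(b - a) / D(a‖b)`, as a function of `a`, is `D(b‖a)`. -/
lemma binKL_swap (a b : ℝ) :
    binKL b a = -1 * binKL a b - (b - a) * (log (a / b) - log ((1 - a) / (1 - b))) := by
  have hinv (x y : ℝ) : log (y / x) = -log (x / y) := by rw [← log_inv, inv_div]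
  simp only [binKL, hinv a b, hinv (1 - a) (1 - b)]
  ring

/-- On the domain {(μ₁, μᵢ) ∈ (0,1)² : μ₁ > μᵢ}, the partial derivative of
f(μ₁, μᵢ) = (μ₁ − μᵢ)/D(μᵢ‖μ₁) with respect to μᵢ equals
D(μ₁‖μᵢ)/D(μᵢ‖μ₁)², and in particular is nonnegative. -/
theorem deriv_f_mui (μ1 μi : ℝ) (h1 : μ1 ∈ Set.Ioo (0:ℝ) 1)
    (hi : μi ∈ Set.Ioo (0:ℝ) 1) (hlt : μi < μ1) :
    deriv (fun y => (μ1 - y) / binKL y μ1) μi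
      = binKL μ1 μi / (binKL μi μ1) ^ 2 ∧
    0 ≤ deriv (fun y => (μ1 - y) / binKL y μ1) μi := by
  have hD : 0 < binKL μi μ1 := binKL_pos (Ioo_subset_Icc_self hi) h1 hlt.ne
  have hderiv := (((hasDerivAt_id' μi).const_sub μ1).div
    (hasDerivAt_binKL_left hi.1.ne' hi.2.ne h1.1.ne' h1.2.ne) hD.ne').deriv
  rw [← binKL_swap] at hderiv
  refine ⟨hderiv, hderiv ▸ div_nonneg ?_ (sq_nonneg _)⟩
  exact (binKL_pos (Ioo_subset_Icc_self h1) hi hlt.ne').le
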